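/- Let X₁, …, Xₙ ∈ ℝ be data points and let H = ∪_{k,l=1}^{K'} ∪_{i=1}^{n} {c ∈ ℝ^{K'} : X_i = (c_k + c_l)/2}. Let c ∈ ℝ^{K'} \ H have pairwise distinct coordinates, and let N_k(c) = |{i : |X_i − c_k| < |X_i − c_l| for all l ≠ k}|. Then on a neighborhood of c the k-means objective W_n coincides with a quadratic polynomial; in particular W_n is infinitely differentiable at c, its second partial derivatives satisfy ∂²W_n(c)/∂c_k∂c_l = 0 for k ≠ l and ∂²W_n(c)/∂c_k² = N_k(c), and all third-order partial derivatives of W_n vanish at c. -/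

import Mathlib

open scoped Classical

/-- The k-means objective for data `X₁,…,Xₙ ∈ ℝ` and centers `c ∈ ℝ^{K'}`:
`W_n(c) = (1/2)·∑ᵢ min_k (c_k − X_i)²`. -/
noncomputable def Wn (n K' : ℕ) (X : Fin n → ℝ) (c : Fin K' → ℝ) : ℝ :=
  (1 / 2) * ∑ i, ⨅ k, (c k - X i) ^ 2

/-- away from the set `H` and for centers with pairwise distinct
coordinates, `W_n` coincides with a quadratic polynomial on a neighborhood of
`c`; in particular it is `C^∞` at `c`, its second partials are
`∂²W_n(c)/∂c_k∂c_l = 0` for `k ≠ l` and `∂²W_n(c)/∂c_k² = N_k(c)`, and all its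
third-order partials vanish at `c`. -/
theorem stmt9 (n K' : ℕ) (hK' : 0 < K') (X : Fin n → ℝ) (c : Fin K' → ℝ)
    (hcH : ∀ (k l : Fin K') (i : Fin n), X i ≠ (c k + c l) / 2)
    (hinj : Function.Injective c)
    (N : Fin K' → ℕ)
    (hN : ∀ k, N k = (Finset.univ.filter
        (fun i : Fin n => ∀ l, l ≠ k → |X i - c k| < |X i - c l|)).card) :
    (∃ (a₀ : ℝ) (b : Fin K' → ℝ) (Q : Fin K' → Fin K' → ℝ),
        ∀ᶠ x in nhds c, Wn n K' X x =
          a₀ + (∑ k, b k * x k) + ∑ k, ∑ l, Q k l * x k * x l) ∧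
    ContDiffAt ℝ (⊤ : ℕ∞) (Wn n K' X) c ∧
    (∀ k l : Fin K',
        fderiv ℝ (fun x => fderiv ℝ (Wn n K' X) x (Pi.single k 1)) c (Pi.single l 1) =
          if k = l then (N k : ℝ) else 0) ∧
    (∀ k l m : Fin K',
        fderiv ℝ (fun x =>
            fderiv ℝ (fun y => fderiv ℝ (Wn n K' X) y (Pi.single k 1)) x
              (Pi.single l 1)) c (Pi.single m 1) = 0) := by
  classical
  haveI : Nonempty (Fin K') := ⟨⟨0, hK'⟩⟩
  have habs : ∀ a b : ℝ, |a| < |b| ↔ a ^ 2 < b ^ 2 := by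
    intro a b
    rw [← sq_abs a, ← sq_abs b]
    exact (pow_lt_pow_iff_left₀ (abs_nonneg a) (abs_nonneg b) two_ne_zero).symm
  -- argmin function
  have hfex : ∀ i : Fin n, ∃ k : Fin K',
      ∀ l, l ≠ k → (c k - X i) ^ 2 < (c l - X i) ^ 2 := by
    intro i
    obtain ⟨k, -, hk⟩ := Finset.exists_min_image Finset.univ
      (fun k => (c k - X i) ^ 2) ⟨⟨0, hK'⟩, Finset.mem_univ _⟩
    refine ⟨k, fun l hl => lt_of_le_of_ne (hk l (Finset.mem_univ _)) ?_⟩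
    intro heq
    rcases sq_eq_sq_iff_eq_or_eq_neg.mp heq with h | h
    · exact hl (hinj (by linarith)).symm
    · exact hcH k l i (by linarith)
  choose f hf using hfex
  -- distances written with abs
  have hf' : ∀ i : Fin n, ∀ l, l ≠ f i → |X i - c (f i)| < |X i - c l| := by
    intro i l hl
    rw [habs, show (X i - c (f i)) ^ 2 = (c (f i) - X i) ^ 2 from by ring,
      show (X i - c l) ^ 2 = (c l - X i) ^ 2 from by ring]
    exact hf i l hl
  -- counting
  set Mk : Fin K' → ℕ := fun k => (Finset.univ.filter fun i : Fin n => f i = k).card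
    with hMkdef
  have hNM : ∀ k, N k = Mk k := by
    intro k
    have hset : (Finset.univ.filter
        (fun i : Fin n => ∀ l, l ≠ k → |X i - c k| < |X i - c l|))
        = Finset.univ.filter (fun i : Fin n => f i = k) := by
      ext i
      simp only [Finset.mem_filter, Finset.mem_univ, true_and]
      constructor
      · intro h
        by_contra hne
        have h1 := h (f i) hne
        have h2 := hf' i k (fun hh => hne hh.symm)
        linarith
      · intro h l hl
        subst h
        exact hf' i l hl
    rw [hN k, hset, hMkdef]
  -- the local polynomial
  set F : (Fin K' → ℝ) → ℝ := fun x => (1 / 2) * ∑ i, (x (f i) - X i) ^ 2 with hFdef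
  have hUev : ∀ᶠ x in nhds c, ∀ i : Fin n, ∀ l : Fin K',
      l ≠ f i → (x (f i) - X i) ^ 2 < (x l - X i) ^ 2 := by
    rw [Filter.eventually_all]
    intro i
    rw [Filter.eventually_all]
    intro l
    by_cases hl : l = f i
    · filter_upwards with x hx; exact absurd hl hx
    · have h1 : ContinuousAt (fun x : Fin K' → ℝ => (x (f i) - X i) ^ 2) c :=
        (((continuous_apply (f i)).sub continuous_const).pow 2).continuousAt
      have h2 : ContinuousAt (fun x : Fin K' → ℝ => (x l - X i) ^ 2) c :=
        (((continuous_apply l).sub continuous_const).pow 2).continuousAt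
      filter_upwards [h1.eventually_lt h2 (hf i l hl)] with x hx _
      exact hx
  have hWF : Wn n K' X =ᶠ[nhds c] F := by
    filter_upwards [hUev] with x hx
    show (1 / 2 : ℝ) * ∑ i, ⨅ k, (x k - X i) ^ 2 = _
    rw [hFdef]
    congr 1
    apply Finset.sum_congr rfl
    intro i _
    apply le_antisymm
    · exact ciInf_le (Finite.bddBelow_range _) (f i)
    · apply le_ciInf
      intro l
      by_cases hl : l = f i
      · subst hl; exact le_rfl
      · exact (hx i l hl).le
  -- smoothness of F
  have hFsmooth : ContDiff ℝ (⊤ : ℕ∞) F := by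
    rw [hFdef]
    apply ContDiff.mul contDiff_const
    apply ContDiff.sum
    intro i _
    exact ((ContinuousLinearMap.proj (f i) :
      (Fin K' → ℝ) →L[ℝ] ℝ).contDiff.sub contDiff_const).pow 2
  -- derivative of F
  set P : Fin K' → (Fin K' → ℝ) →L[ℝ] ℝ :=
    fun k => ContinuousLinearMap.proj k with hPdef
  set D : (Fin K' → ℝ) → ((Fin K' → ℝ) →L[ℝ] ℝ) :=
    fun x => (1 / 2 : ℝ) • ∑ i, ((x (f i) - X i) • P (f i) + (x (f i) - X i) • P (f i))
    with hDdef
  have hD : ∀ x, HasFDerivAt F (D x) x := by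
    intro x
    have hterm : ∀ i : Fin n, HasFDerivAt (fun y : Fin K' → ℝ => (y (f i) - X i) ^ 2)
        ((x (f i) - X i) • P (f i) + (x (f i) - X i) • P (f i)) x := by
      intro i
      have h0 : HasFDerivAt (fun y : Fin K' → ℝ => y (f i) - X i) (P (f i)) x :=
        (P (f i)).hasFDerivAt.sub_const (X i)
      have := h0.fun_mul h0
      have heq : (fun y : Fin K' → ℝ => (y (f i) - X i) ^ 2)
          = fun y => (y (f i) - X i) * (y (f i) - X i) := by
        funext y; ring
      rw [heq]
      simpa using this
    have hsum := HasFDerivAt.fun_sum (fun i (_ : i ∈ Finset.univ) => hterm i)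
    exact hsum.const_mul (1 / 2 : ℝ)
  -- value of D applied to single vectors
  have hDapp : ∀ (x : Fin K' → ℝ) (k : Fin K'),
      D x (Pi.single k 1) = ∑ i, if f i = k then x k - X i else 0 := by
    intro x k
    rw [hDdef]
    simp only [ContinuousLinearMap.smul_apply, ContinuousLinearMap.sum_apply,
      ContinuousLinearMap.add_apply, hPdef, ContinuousLinearMap.proj_apply,
      Pi.single_apply, smul_eq_mul]
    rw [Finset.mul_sum]
    apply Finset.sum_congr rfl
    intro i _
    by_cases h : f i = k
    · subst h; simp; ring
    · simp [h]
  -- E k : the first partial derivative function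
  set E : Fin K' → (Fin K' → ℝ) → ℝ :=
    fun k x => ∑ i, if f i = k then x k - X i else 0 with hEdef
  have hEderiv : ∀ (k : Fin K') (x : Fin K' → ℝ),
      HasFDerivAt (E k) ((Mk k : ℝ) • P k) x := by
    intro k x
    have hterm : ∀ i : Fin n, HasFDerivAt
        (fun y : Fin K' → ℝ => if f i = k then y k - X i else 0)
        (if f i = k then P k else 0) x := by
      intro i
      by_cases h : f i = k
      · simp only [h, if_true]
        exact (P k).hasFDerivAt.sub_const (X i)
      · simpa [h] using (hasFDerivAt_const (0 : ℝ) x)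
    have hsum := HasFDerivAt.fun_sum (fun i (_ : i ∈ Finset.univ) => hterm i)
    have heq : (∑ i : Fin n, if f i = k then P k else 0) = (Mk k : ℝ) • P k := by
      rw [← Finset.sum_filter, Finset.sum_const, hMkdef]
      rw [Nat.cast_smul_eq_nsmul]
    rw [← heq]
    exact hsum
  -- first derivatives agree near c
  have h1 : ∀ k : Fin K',
      (fun y => fderiv ℝ (Wn n K' X) y (Pi.single k 1)) =ᶠ[nhds c] E k := by
    intro k
    filter_upwards [hWF.fderiv (𝕜 := ℝ)] with y hy
    rw [hy, (hD y).fderiv, hDapp]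
  -- second derivative values
  have h2val : ∀ k l : Fin K',
      fderiv ℝ (fun x => fderiv ℝ (Wn n K' X) x (Pi.single k 1)) c (Pi.single l 1)
        = if k = l then (N k : ℝ) else 0 := by
    intro k l
    rw [(h1 k).fderiv_eq, (hEderiv k c).fderiv]
    simp only [ContinuousLinearMap.smul_apply, hPdef, ContinuousLinearMap.proj_apply,
      Pi.single_apply, smul_eq_mul, hNM k]
    by_cases h : k = l
    · simp [h]
    · have h' : ¬ l = k := fun hh => h hh.symm
      simp [h, h']
  refine ⟨?_, ?_, h2val, ?_⟩
  · -- quadratic polynomial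
    refine ⟨(1 / 2) * ∑ i, (X i) ^ 2,
      fun k => -∑ i, (if f i = k then X i else 0),
      fun k l => if k = l then (Mk k : ℝ) / 2 else 0, ?_⟩
    filter_upwards [hWF] with x hx
    rw [hx]
    simp only [hFdef]
    have hb' : ∑ k, (∑ i, if f i = k then X i else 0) * x k
        = ∑ i, X i * x (f i) := by
      calc ∑ k, (∑ i, if f i = k then X i else 0) * x k
          = ∑ k, ∑ i, (if f i = k then X i * x k else 0) := by
            refine Finset.sum_congr rfl fun k _ => ?_
            rw [Finset.sum_mul]
            exact Finset.sum_congr rfl fun i _ => by rw [ite_mul, zero_mul]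
        _ = ∑ i, ∑ k, (if f i = k then X i * x k else 0) := Finset.sum_comm
        _ = ∑ i, X i * x (f i) := by
            refine Finset.sum_congr rfl fun i _ => ?_
            rw [Finset.sum_ite_eq]
            simp
    have hbneg : ∑ k, (-∑ i, (if f i = k then X i else 0)) * x k
        = -∑ i, X i * x (f i) := by
      simp only [neg_mul]
      rw [Finset.sum_neg_distrib, hb']
    have hcast : ∀ k : Fin K', (Mk k : ℝ) = ∑ i, if f i = k then (1 : ℝ) else 0 := by
      intro k
      rw [hMkdef]
      rw [Finset.cast_card, Finset.sum_filter]
    have hq : ∑ k, ∑ l, (if k = l then (Mk k : ℝ) / 2 else 0) * x k * x l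
        = ∑ i, x (f i) * x (f i) / 2 := by
      calc ∑ k, ∑ l, (if k = l then (Mk k : ℝ) / 2 else 0) * x k * x l
          = ∑ k, (Mk k : ℝ) / 2 * x k * x k := by
            refine Finset.sum_congr rfl fun k _ => ?_
            simp only [ite_mul, zero_mul]
            rw [Finset.sum_ite_eq]
            simp
        _ = ∑ k, ∑ i, (if f i = k then x k * x k / 2 else 0) := by
            refine Finset.sum_congr rfl fun k _ => ?_
            rw [hcast k, Finset.sum_div, Finset.sum_mul, Finset.sum_mul]
            refine Finset.sum_congr rfl fun i _ => ?_
            by_cases h : f i = k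
            · simp only [h, if_true]; ring
            · simp [h]
        _ = ∑ i, ∑ k, (if f i = k then x k * x k / 2 else 0) := Finset.sum_comm
        _ = ∑ i, x (f i) * x (f i) / 2 := by
            refine Finset.sum_congr rfl fun i _ => ?_
            rw [Finset.sum_ite_eq]
            simp
    rw [hbneg, hq, Finset.mul_sum, Finset.mul_sum, ← Finset.sum_neg_distrib,
      ← Finset.sum_add_distrib, ← Finset.sum_add_distrib]
    exact Finset.sum_congr rfl fun i _ => by ring
  · exact hFsmooth.contDiffAt.congr_of_eventuallyEq hWF
  · -- third derivatives vanish
    intro k l m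
    have h2 : (fun x => fderiv ℝ (fun y => fderiv ℝ (Wn n K' X) y (Pi.single k 1)) x
        (Pi.single l 1)) =ᶠ[nhds c] (fun _ => ((Mk k : ℝ) • P k) (Pi.single l 1)) := by
      filter_upwards [(h1 k).fderiv (𝕜 := ℝ)] with x hx
      rw [hx, (hEderiv k x).fderiv]
    rw [h2.fderiv_eq, fderiv_fun_const]
    simp
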